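/- Let (Mₙ, dₙ) → (M∞, d∞) in the Gromov–Hausdorff sense via correspondences Cₙ with dist(Cₙ) → 0, let I ⊂ ℝ be a bounded interval, and equip Xₙ := I × Mₙ with the causal-cylinder signed distance σₙ((t,p),(s,q)) = sqrt((s−t)² − dₙ(p,q)²) when s−t ≥ dₙ(p,q) (antisymmetrically extended, 0 otherwise). Then the correspondences Ĉₙ := Id_I × Cₙ satisfy dist⁻(Ĉₙ) → 0, where dist⁻ is the distortion with respect to the signed Lorentzian distances; hence Xₙ → X∞ in d⁻_GH. -/

import Mathlib

open scoped ENNReal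

/-- Distortion of a relation w.r.t. two real-valued two-point functions. -/
noncomputable def distortion {X Y : Type*} (dX : X → X → ℝ) (dY : Y → Y → ℝ)
    (R : Set (X × Y)) : ℝ≥0∞ :=
  ⨆ p ∈ R, ⨆ q ∈ R, ENNReal.ofReal |dX p.1 q.1 - dY p.2 q.2|

def IsCorrespondence {X Y : Type*} (R : Set (X × Y)) : Prop :=
  (∀ x, ∃ y, (x, y) ∈ R) ∧ (∀ y, ∃ x, (x, y) ∈ R)

noncomputable def dGHminus {X Y : Type*} (σX : X → X → ℝ) (σY : Y → Y → ℝ) : ℝ≥0∞ :=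
  (1 / 2) * ⨅ (R : Set (X × Y)) (_ : IsCorrespondence R), distortion σX σY R

/-- The causal-cylinder signed Lorentzian distance on `I × α` over a metric space `α`. -/
noncomputable def cylSigmaOn {α : Type*} [MetricSpace α] (I : Set ℝ)
    (x y : I × α) : ℝ :=
  if dist x.2 y.2 ≤ (y.1 : ℝ) - (x.1 : ℝ) then
    Real.sqrt (((y.1 : ℝ) - (x.1 : ℝ)) ^ 2 - dist x.2 y.2 ^ 2)
  else if dist x.2 y.2 ≤ (x.1 : ℝ) - (y.1 : ℝ) then
    - Real.sqrt (((x.1 : ℝ) - (y.1 : ℝ)) ^ 2 - dist x.2 y.2 ^ 2)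
  else 0

/-- The product correspondence `Id_I × C`. -/
def prodCorr {α β : Type*} (I : Set ℝ) (C : Set (α × β)) :
    Set ((I × α) × (I × β)) :=
  {p | p.1.1 = p.2.1 ∧ (p.1.2, p.2.2) ∈ C}

/-!
On a time slab the cylinder distance is `±√(T² − d²)`, with the sign of the time difference `T`
shared by corresponding pairs under `Id_I × C`. Since `√` is ½-Hölder and capping `d` at `|T|`
does not change `√(T² − d²)`, a change of `d` by `δ` moves `√(T² − d²)` by at most `√(2|T|δ)`.
Hence `dist⁻(Id_I × Cₙ) ≤ √(2 diam I · dist(Cₙ)) → 0`, and `Id_I × Cₙ` is again a correspondence.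
-/

open Filter Topology

namespace Real

theorem sqrt_add_le_sqrt_add_sqrt {a b : ℝ} (ha : 0 ≤ a) (hb : 0 ≤ b) : √(a + b) ≤ √a + √b := by
  rw [sqrt_le_left (by positivity)]
  nlinarith [sq_sqrt ha, sq_sqrt hb, sqrt_nonneg a, sqrt_nonneg b]

theorem abs_sqrt_sub_sqrt_le_sqrt_abs_sub (x y : ℝ) : |√x - √y| ≤ √|x - y| := by
  wlog hyx : y ≤ x generalizing x y
  · rw [abs_sub_comm, abs_sub_comm x]
    exact this y x (le_of_not_ge hyx)
  rw [abs_of_nonneg (sub_nonneg.2 (sqrt_le_sqrt hyx)), abs_of_nonneg (sub_nonneg.2 hyx),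
    sub_le_iff_le_add']
  rcases le_or_gt y 0 with hy | hy
  · rw [sqrt_eq_zero'.2 hy, zero_add]
    exact sqrt_le_sqrt (by linarith)
  · calc √x = √(y + (x - y)) := by rw [add_sub_cancel]
      _ ≤ √y + √(x - y) := sqrt_add_le_sqrt_add_sqrt hy.le (sub_nonneg.2 hyx)

theorem sqrt_sq_sub_sq_eq_sqrt_sq_sub_min_sq (T d : ℝ) :
    √(T ^ 2 - d ^ 2) = √(T ^ 2 - min d |T| ^ 2) := by
  rcases le_or_gt d |T| with h | h
  · rw [min_eq_left h]
  · have hsq : T ^ 2 < d ^ 2 := by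
      rw [← sq_abs T]
      exact pow_lt_pow_left₀ h (abs_nonneg T) two_ne_zero
    rw [min_eq_right h.le, sq_abs, sub_self, sqrt_eq_zero'.2 (by linarith), sqrt_zero]

theorem abs_sqrt_sq_sub_sq_sub_le {T d d' : ℝ} (hd : 0 ≤ d) (hd' : 0 ≤ d') :
    |√(T ^ 2 - d ^ 2) - √(T ^ 2 - d' ^ 2)| ≤ √(2 * |T| * |d - d'|) := by
  rw [sqrt_sq_sub_sq_eq_sqrt_sq_sub_min_sq T d, sqrt_sq_sub_sq_eq_sqrt_sq_sub_min_sq T d']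
  refine (abs_sqrt_sub_sqrt_le_sqrt_abs_sub _ _).trans (sqrt_le_sqrt ?_)
  set m := min d |T|
  set m' := min d' |T|
  have hmm' : |m - m'| ≤ |d - d'| := by
    simpa using abs_min_sub_min_le_max d |T| d' |T|
  have hsum : |m' + m| ≤ 2 * |T| := by
    rw [abs_of_nonneg (by positivity)]
    linarith [min_le_right d |T|, min_le_right d' |T|]
  calc |T ^ 2 - m ^ 2 - (T ^ 2 - m' ^ 2)| = |(m' + m) * (m' - m)| := by congr 1; ring
    _ = |m' + m| * |m - m'| := by rw [abs_mul, abs_sub_comm m']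
    _ ≤ 2 * |T| * |d - d'| := by gcongr

end Real

theorem cylSigmaOn_eq_ite {α : Type*} [MetricSpace α] (I : Set ℝ) (x y : I × α) :
    cylSigmaOn I x y =
      if 0 ≤ (y.1 : ℝ) - x.1 then √(((y.1 : ℝ) - x.1) ^ 2 - dist x.2 y.2 ^ 2)
      else -√(((y.1 : ℝ) - x.1) ^ 2 - dist x.2 y.2 ^ 2) := by
  have hd : 0 ≤ dist x.2 y.2 := dist_nonneg
  unfold cylSigmaOn
  split_ifs <;> try linarith
  · congr 2; ring
  · rw [Real.sqrt_eq_zero'.2 (by nlinarith)]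
  · rw [Real.sqrt_eq_zero'.2 (by nlinarith), neg_zero]

theorem abs_cylSigmaOn_sub_cylSigmaOn_le {α β : Type*} [MetricSpace α] [MetricSpace β]
    (I : Set ℝ) {x y : I × α} {x' y' : I × β} (hx : x.1 = x'.1) (hy : y.1 = y'.1) :
    |cylSigmaOn I x y - cylSigmaOn I x' y'| ≤
      √(2 * dist (x.1 : ℝ) y.1 * |dist x.2 y.2 - dist x'.2 y'.2|) := by
  rw [cylSigmaOn_eq_ite, cylSigmaOn_eq_ite, ← hx, ← hy, dist_comm (x.1 : ℝ), Real.dist_eq]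
  have key := Real.abs_sqrt_sq_sub_sq_sub_le (T := (y.1 : ℝ) - x.1)
    (dist_nonneg (x := x.2) (y := y.2)) (dist_nonneg (x := x'.2) (y := y'.2))
  split_ifs
  · exact key
  · rwa [neg_sub_neg, abs_sub_comm]

theorem le_distortion {X Y : Type*} (dX : X → X → ℝ) (dY : Y → Y → ℝ)
    {R : Set (X × Y)} {p q : X × Y} (hp : p ∈ R) (hq : q ∈ R) :
    ENNReal.ofReal |dX p.1 q.1 - dY p.2 q.2| ≤ distortion dX dY R :=
  le_iSup₂_of_le p hp (le_iSup₂_of_le q hq le_rfl)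

theorem distortion_prodCorr_le {α β : Type*} [MetricSpace α] [MetricSpace β] {I : Set ℝ}
    {D : ℝ} (hD : ∀ ⦃s⦄, s ∈ I → ∀ ⦃t⦄, t ∈ I → dist s t ≤ D) (C : Set (α × β)) :
    distortion (cylSigmaOn (α := α) I) (cylSigmaOn (α := β) I) (prodCorr I C) ≤
      (ENNReal.ofReal (2 * D) * distortion (fun p q : α => dist p q) (fun p q : β => dist p q) C)
        ^ (1 / 2 : ℝ) := by
  refine iSup₂_le fun p hp => iSup₂_le fun q hq => ?_
  have hpq := hD p.1.1.2 q.1.1.2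
  have hD0 : 0 ≤ D := dist_nonneg.trans hpq
  calc ENNReal.ofReal |cylSigmaOn I p.1 q.1 - cylSigmaOn I p.2 q.2|
      ≤ ENNReal.ofReal √(2 * D * |dist p.1.2 q.1.2 - dist p.2.2 q.2.2|) := by
        refine ENNReal.ofReal_le_ofReal ((abs_cylSigmaOn_sub_cylSigmaOn_le I hp.1 hq.1).trans ?_)
        gcongr
    _ = (ENNReal.ofReal (2 * D) * ENNReal.ofReal |dist p.1.2 q.1.2 - dist p.2.2 q.2.2|)
          ^ (1 / 2 : ℝ) := by
        rw [← ENNReal.ofReal_mul (by positivity),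
          ENNReal.ofReal_rpow_of_nonneg (by positivity) (by norm_num), Real.sqrt_eq_rpow]
    _ ≤ _ := by
        gcongr
        exact le_distortion (fun p q : α => dist p q) (fun p q : β => dist p q)
          (p := (p.1.2, p.2.2)) (q := (q.1.2, q.2.2)) hp.2 hq.2

theorem IsCorrespondence.prodCorr {α β : Type*} {C : Set (α × β)} (hC : IsCorrespondence C)
    (I : Set ℝ) : IsCorrespondence (prodCorr I C) :=
  ⟨fun ⟨t, x⟩ => let ⟨y, hy⟩ := hC.1 x; ⟨(t, y), rfl, hy⟩,
    fun ⟨t, y⟩ => let ⟨x, hx⟩ := hC.2 y; ⟨(t, x), rfl, hx⟩⟩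

theorem dGHminus_le_half_distortion {X Y : Type*} {σX : X → X → ℝ} {σY : Y → Y → ℝ}
    {R : Set (X × Y)} (hR : IsCorrespondence R) :
    dGHminus σX σY ≤ 1 / 2 * distortion σX σY R :=
  mul_le_mul_right (iInf₂_le R hR) _

theorem cylinder_convergence_general
    (M : ℕ → Type*) (Minf : Type*) [∀ n, MetricSpace (M n)] [MetricSpace Minf]
    (C : ∀ n, Set (M n × Minf)) (hcorr : ∀ n, IsCorrespondence (C n))
    (hdist : Filter.Tendsto
      (fun n => distortion (fun p q : M n => dist p q) (fun p q : Minf => dist p q) (C n))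
      Filter.atTop (nhds 0))
    (I : Set ℝ) (hI : Bornology.IsBounded I) :
    Filter.Tendsto
      (fun n => distortion (cylSigmaOn (α := M n) I) (cylSigmaOn (α := Minf) I)
        (prodCorr I (C n))) Filter.atTop (nhds 0) ∧
    Filter.Tendsto
      (fun n => dGHminus (cylSigmaOn (α := M n) I) (cylSigmaOn (α := Minf) I))
      Filter.atTop (nhds 0) := by
  obtain ⟨D, hD⟩ := Metric.isBounded_iff.1 hI
  have hbound : Tendsto (fun n => (ENNReal.ofReal (2 * D) *
      distortion (fun p q : M n => dist p q) (fun p q : Minf => dist p q) (C n)) ^ (1 / 2 : ℝ))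
      atTop (𝓝 0) := by
    have hmul := ENNReal.Tendsto.const_mul hdist (Or.inr (ENNReal.ofReal_ne_top (r := 2 * D)))
    rw [mul_zero] at hmul
    exact (ENNReal.continuous_rpow_const.tendsto' 0 0 (ENNReal.zero_rpow_of_pos (by norm_num))).comp
      hmul
  have hcyl := tendsto_of_tendsto_of_tendsto_of_le_of_le tendsto_const_nhds hbound
    (fun _ => zero_le) fun n => distortion_prodCorr_le hD (C n)
  refine ⟨hcyl, tendsto_of_tendsto_of_tendsto_of_le_of_le tendsto_const_nhds ?_
    (fun _ => zero_le) fun n => dGHminus_le_half_distortion ((hcorr n).prodCorr I)⟩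
  simpa using ENNReal.Tendsto.const_mul hcyl (Or.inr (by norm_num))

theorem cylinder_convergence
    (M : ℕ → Type*) (Minf : Type*) [∀ n, MetricSpace (M n)] [MetricSpace Minf]
    (C : ∀ n, Set (M n × Minf)) (hcorr : ∀ n, IsCorrespondence (C n))
    (hdist : Filter.Tendsto
      (fun n => distortion (fun p q : M n => dist p q) (fun p q : Minf => dist p q) (C n))
      Filter.atTop (nhds 0))
    (I : Set ℝ) (hI : Bornology.IsBounded I) (hI' : I.OrdConnected) :
    Filter.Tendsto
      (fun n => distortion (cylSigmaOn (α := M n) I) (cylSigmaOn (α := Minf) I)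
        (prodCorr I (C n))) Filter.atTop (nhds 0) ∧
    Filter.Tendsto
      (fun n => dGHminus (cylSigmaOn (α := M n) I) (cylSigmaOn (α := Minf) I))
      Filter.atTop (nhds 0) :=
  cylinder_convergence_general M Minf C hcorr hdist I hI
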